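/- arXiv:2604.05148 — 3 statements merged into one kernel-verified Lean document; each statement's English description precedes it below -/
import Mathlib

section
/- Let F be a field of characteristic p > 0, let s ∈ F with s ≠ 0, and set t = s^p. Then the maps f(x,y) = y − s·x and g(u) = ((u^p − u)/s, u^p) are mutually inverse additive bijections between the set U(F) = {(x,y) ∈ F² : y^p − y = t·x^p} and F. In particular g(u) ∈ U(F) for every u ∈ F, f(g(u)) = u, and g(f(x,y)) = (x,y) whenever y^p − y = t·x^p. -/
section CommRing

variable {R : Type*} [CommRing R] (p : ℕ) [Fact p.Prime] [CharP R p]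

theorem sub_mul_pow_char_eq_of_sub_eq {s x y : R} (h : y ^ p - y = s ^ p * x ^ p) :
    (y - s * x) ^ p = y := by
  rw [sub_pow_char, mul_pow, ← h, sub_sub_cancel]

end CommRing

section Field

variable {F : Type*} [Field F] (p : ℕ) [Fact p.Prime] [CharP F p]

theorem pow_char_sub_eq_mul_div_pow {s : F} (hs : s ≠ 0) (u : F) :
    (u ^ p) ^ p - u ^ p = s ^ p * ((u ^ p - u) / s) ^ p := by
  rw [div_pow, mul_div_cancel₀ _ (pow_ne_zero p hs), sub_pow_char]

end Field

theorem stmt_2 (F : Type*) [Field F] (p : ℕ) [Fact p.Prime] [CharP F p]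
    (s : F) (hs : s ≠ 0) (t : F) (ht : t = s ^ p) :
    (∀ u : F, (u ^ p) ^ p - u ^ p = t * ((u ^ p - u) / s) ^ p
        ∧ (u ^ p) - s * ((u ^ p - u) / s) = u)
    ∧ (∀ x y : F, y ^ p - y = t * x ^ p →
        ((y - s * x) ^ p - (y - s * x)) / s = x ∧ (y - s * x) ^ p = y)
    ∧ (∀ x₁ y₁ x₂ y₂ : F,
        (y₁ + y₂) - s * (x₁ + x₂) = (y₁ - s * x₁) + (y₂ - s * x₂)) := by
  subst ht
  refine ⟨fun u => ⟨pow_char_sub_eq_mul_div_pow p hs u, ?_⟩, fun x y h => ?_,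
    fun _ _ _ _ => by ring⟩
  · rw [mul_div_cancel₀ _ hs, sub_sub_cancel]
  · have hy := sub_mul_pow_char_eq_of_sub_eq p h
    refine ⟨?_, hy⟩
    rw [hy, sub_sub_cancel, mul_div_cancel_left₀ _ hs]
end

section
/- Let k be a field of characteristic p > 2 and K = k((t)). For every a ∈ k with a ≠ 0, there exist no x, y ∈ K such that a·t^{−1} + t·x^p = y^p − y. Equivalently, a·t^{−1} does not lie in the additive subgroup ℘(K) + t·K^p. -/
/-!
Let `v` be the `t`-adic valuation. Since `v (a t⁻¹) = -1` and `v (t x ^ p) = 1 + p v(x)` is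
`≡ 1 (mod p)`, the two cannot coincide when `p > 2`, so the valuation of `a t⁻¹ + t x ^ p` is
their minimum: negative and prime to `p`. On the other hand `v (y ^ p - y)` is `p v(y)` when
`v(y) < 0` and is `≥ 0` otherwise.
-/

namespace AddValuation

variable {R : Type*} [Ring R] (v : AddValuation R (WithTop ℤ))

theorem map_pow_sub_self_of_neg {n : ℕ} (hn : 2 ≤ n) {y : R} (hy : v y < 0) :
    v (y ^ n - y) = n • v y := by
  obtain ⟨m, hm⟩ := WithTop.ne_top_iff_exists.1 hy.ne_top
  have hm_neg : m < 0 := by exact_mod_cast hm ▸ hy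
  have hlt : v (y ^ n) < v y := by
    rw [v.map_pow, ← hm, ← WithTop.coe_nsmul, WithTop.coe_lt_coe, nsmul_eq_mul]
    nlinarith
  rw [v.map_sub_eq_of_lt_left hlt, v.map_pow]

theorem map_pow_sub_self_nonneg {n : ℕ} {y : R} (hy : 0 ≤ v y) : 0 ≤ v (y ^ n - y) :=
  v.map_le_sub (v.map_pow y n ▸ nsmul_nonneg hy n) hy

theorem pow_sub_self_ne_of_not_dvd {n : ℕ} (hn : 2 ≤ n) {z : R} {r : ℤ} (hz : v z = r)
    (hr : r < 0) (hndvd : ¬ (n : ℤ) ∣ r) (y : R) : y ^ n - y ≠ z := by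
  intro h
  rcases lt_or_ge (v y) 0 with hy | hy
  · obtain ⟨m, hm⟩ := WithTop.ne_top_iff_exists.1 hy.ne_top
    rw [← h, v.map_pow_sub_self_of_neg hn hy, ← hm, ← WithTop.coe_nsmul, WithTop.coe_inj,
      nsmul_eq_mul] at hz
    exact hndvd ⟨m, hz.symm⟩
  · have := v.map_pow_sub_self_nonneg (n := n) hy
    rw [h, hz] at this
    exact absurd (WithTop.coe_nonneg.1 this) hr.not_ge

theorem exists_map_add_mul_pow {p : ℕ} (hp : 2 < p) {u t : R} (hu : v u = (-1 : ℤ))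
    (ht : v t = (1 : ℤ)) (x : R) :
    ∃ r : ℤ, v (u + t * x ^ p) = r ∧ r < 0 ∧ ¬ (p : ℤ) ∣ r := by
  have hp1 : ¬ (p : ℤ) ∣ 1 := fun h => by
    have := Int.le_of_dvd one_pos h; omega
  have hpm1 : ¬ (p : ℤ) ∣ -1 := (dvd_neg).not.2 hp1
  cases hx : v x with
  | top =>
    have hlt : v u < v (t * x ^ p) := by
      rw [v.map_mul, ← Nat.sub_add_cancel (by omega : 1 ≤ p), pow_succ, v.map_mul, hx,
        WithTop.add_top, WithTop.add_top, hu]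
      exact WithTop.coe_lt_top _
    exact ⟨-1, by rw [v.map_add_eq_of_lt_left hlt, hu], by norm_num, hpm1⟩
  | coe m =>
    have htx : v (t * x ^ p) = ((1 + p * m : ℤ) : WithTop ℤ) := by
      rw [v.map_mul, v.map_pow, ht, hx, ← WithTop.coe_nsmul, ← WithTop.coe_add, nsmul_eq_mul]
    have hne : (-1 : ℤ) ≠ 1 + p * m := fun h => by
      have := Int.le_of_dvd two_pos (⟨-m, by rw [mul_neg]; linarith⟩ : (p : ℤ) ∣ 2); omega
    refine ⟨min (-1) (1 + p * m), ?_, min_lt_of_left_lt (by norm_num), ?_⟩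
    · rw [v.map_add_of_distinct_val (by rw [hu, htx]; exact_mod_cast hne), hu, htx,
        WithTop.coe_min]
    · rcases min_choice (-1 : ℤ) (1 + p * m) with h | h <;> rw [h]
      · exact hpm1
      · exact fun hd => hp1 ((Int.dvd_add_left (dvd_mul_right _ _)).1 hd)

end AddValuation

theorem stmt_4_general (k : Type*) [Field k] (p : ℕ) (hp : 2 < p)
    (a : k) (ha : a ≠ 0) :
    ¬ ∃ x y : LaurentSeries k,
      HahnSeries.single (-1 : ℤ) a + HahnSeries.single (1 : ℤ) (1 : k) * x ^ p
        = y ^ p - y := by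
  rintro ⟨x, y, hxy⟩
  set v := HahnSeries.addVal ℤ k
  have hu : v (HahnSeries.single (-1 : ℤ) a) = (-1 : ℤ) := by
    rw [HahnSeries.addVal_apply, HahnSeries.orderTop_single ha]
  have ht : v (HahnSeries.single (1 : ℤ) (1 : k)) = (1 : ℤ) := by
    rw [HahnSeries.addVal_apply, HahnSeries.orderTop_single one_ne_zero]
  obtain ⟨r, hr, hr_neg, hr_ndvd⟩ := v.exists_map_add_mul_pow hp hu ht x
  exact v.pow_sub_self_ne_of_not_dvd hp.le hr hr_neg hr_ndvd y hxy.symm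

theorem stmt_4 (k : Type*) [Field k] (p : ℕ) [Fact p.Prime] [CharP k p] (hp : 2 < p)
    (a : k) (ha : a ≠ 0) :
    ¬ ∃ x y : LaurentSeries k,
      HahnSeries.single (-1 : ℤ) a + HahnSeries.single (1 : ℤ) (1 : k) * x ^ p
        = y ^ p - y :=
  stmt_4_general k p hp a ha
end

section
/- Let k be a field of characteristic p > 2 and K = k((t)). The map k → K/(℘(K) + t·K^p) sending a to the class of a·t^{−1} is an injective group homomorphism. -/
/-!
Compare orders in `t` modulo `p`. If `y` has negative order `m`, then `y ^ p - y` has order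
`p * m`; otherwise it has nonnegative order. But for `c ≠ 0` the summands of
`t * x ^ p + c * t⁻¹` have orders `≡ 1` and `≡ -1` mod `p`, distinct as `p > 2`, so the sum has
negative order prime to `p`. Hence `c * t⁻¹ = y ^ p - y - t * x ^ p` forces `c = 0`.
-/

namespace HahnSeries

variable {Γ R : Type*} [LinearOrder Γ] [Zero Γ]

theorem order_add_of_order_lt [AddMonoid R] {x y : HahnSeries Γ R} (hx : x ≠ 0) (hy : y ≠ 0)
    (hxy : x.order < y.order) : (x + y).order = x.order := by
  have hlt : x.orderTop < y.orderTop := by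
    rw [← order_eq_orderTop_of_ne_zero hx, ← order_eq_orderTop_of_ne_zero hy]
    exact_mod_cast hxy
  have hsum := orderTop_add_eq_left hlt
  have hne : x + y ≠ 0 := by
    rw [← orderTop_ne_top, hsum, orderTop_ne_top]; exact hx
  rw [← order_eq_orderTop_of_ne_zero hx, ← order_eq_orderTop_of_ne_zero hne] at hsum
  exact_mod_cast hsum

theorem order_add_of_order_ne [AddCommMonoid R] {x y : HahnSeries Γ R} (hx : x ≠ 0) (hy : y ≠ 0)
    (hxy : x.order ≠ y.order) : (x + y).order = min x.order y.order := by
  rcases hxy.lt_or_gt with h | h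
  · rw [order_add_of_order_lt hx hy h, min_eq_left h.le]
  · rw [add_comm, order_add_of_order_lt hy hx h, min_eq_right h.le]

end HahnSeries

open HahnSeries

namespace LaurentSeries
variable {R : Type*} [CommRing R] [NoZeroDivisors R]

theorem order_pow_sub_self_of_order_neg {y : LaurentSeries R} (hy : y ≠ 0) (hneg : y.order < 0)
    {n : ℕ} (hn : 1 < n) : (y ^ n - y).order = n * y.order := by
  have hlt : (y ^ n).order < (-y).order := by
    rw [order_pow, order_neg, nsmul_eq_mul]
    nlinarith
  rw [sub_eq_add_neg, order_add_of_order_lt (pow_ne_zero n hy) (neg_ne_zero.2 hy) hlt,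
    order_pow, nsmul_eq_mul]

theorem order_pow_sub_self_nonneg {y : LaurentSeries R} (h : 0 ≤ y.order) (n : ℕ) :
    0 ≤ (y ^ n - y).order := by
  have hpow : 0 ≤ (y ^ n).order := by
    rw [order_pow]; exact nsmul_nonneg h n
  rw [← zero_le_orderTop_iff] at h hpow ⊢
  exact (le_min hpow h).trans min_orderTop_le_orderTop_sub

variable [Nontrivial R]

theorem order_single_one_mul_pow_add_single_neg_one {p : ℕ} (hp : 2 < p) {c : R} (hc : c ≠ 0)
    (x : LaurentSeries R) :
    (single 1 1 * x ^ p + single (-1) c).order < 0 ∧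
      ¬ (p : ℤ) ∣ (single 1 1 * x ^ p + single (-1) c).order := by
  have hp1 : ¬ (p : ℤ) ∣ 1 := fun h => by have := Int.le_of_dvd one_pos h; omega
  have hp2 : ¬ (p : ℤ) ∣ 2 := fun h => by have := Int.le_of_dvd two_pos h; omega
  rcases eq_or_ne x 0 with rfl | hx
  · simp [zero_pow (by omega : p ≠ 0), order_single hc, hp1]
  have hB : (single (1 : ℤ) (1 : R) * x ^ p).order = 1 + p * x.order := by
    rw [order_mul (single_ne_zero one_ne_zero) (pow_ne_zero p hx),
      order_single one_ne_zero, order_pow, nsmul_eq_mul]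
  have hne : 1 + p * x.order ≠ -1 := fun h => hp2 ⟨-x.order, by linarith⟩
  rw [order_add_of_order_ne
    (mul_ne_zero (single_ne_zero one_ne_zero) (pow_ne_zero p hx))
    (single_ne_zero hc) (by rwa [hB, order_single hc]), hB, order_single hc]
  refine ⟨(min_le_right _ _).trans_lt (by norm_num), ?_⟩
  rcases min_choice (1 + p * x.order) (-1) with h | h <;> rw [h]
  · exact fun h => hp1 ((Int.dvd_add_left (dvd_mul_right _ _)).mp h)
  · exact fun h => hp1 (Int.dvd_neg.mp h)

theorem eq_zero_of_single_neg_one_eq {p : ℕ} (hp : 2 < p) {c : R} {x y : LaurentSeries R}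
    (h : single (-1) c = y ^ p - y - single 1 1 * x ^ p) : c = 0 := by
  by_contra hc
  have hw : y ^ p - y = single 1 1 * x ^ p + single (-1) c := by rw [h]; abel
  obtain ⟨hw_neg, hw_ndvd⟩ := order_single_one_mul_pow_add_single_neg_one hp hc x
  rw [← hw] at hw_neg hw_ndvd
  rcases le_or_gt 0 y.order with hy | hy
  · exact (order_pow_sub_self_nonneg hy p).not_gt hw_neg
  · have hy0 : y ≠ 0 := by rintro rfl; simp at hy
    exact hw_ndvd ⟨y.order, order_pow_sub_self_of_order_neg hy0 hy (by omega)⟩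

end LaurentSeries

theorem stmt_5_general (k : Type*) [Field k] (p : ℕ) (hp : 2 < p)
    (S : AddSubgroup (LaurentSeries k))
    (hS : (S : Set (LaurentSeries k)) =
      {z | ∃ x y : LaurentSeries k,
        z = y ^ p - y - HahnSeries.single (1 : ℤ) (1 : k) * x ^ p}) :
    Function.Injective
      (fun a : k => (QuotientAddGroup.mk (HahnSeries.single (-1 : ℤ) a) : LaurentSeries k ⧸ S))
    ∧ ∀ a b : k,
      (QuotientAddGroup.mk (HahnSeries.single (-1 : ℤ) (a + b)) : LaurentSeries k ⧸ S)
        = QuotientAddGroup.mk (HahnSeries.single (-1 : ℤ) a)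
          + QuotientAddGroup.mk (HahnSeries.single (-1 : ℤ) b) := by
  let f : k →+ LaurentSeries k ⧸ S := (QuotientAddGroup.mk' S).comp (single.addMonoidHom (-1))
  refine ⟨(injective_iff_map_eq_zero f).2 fun a ha => ?_, map_add f⟩
  have hmem : single (-1) a ∈ (S : Set (LaurentSeries k)) := (QuotientAddGroup.eq_zero_iff _).1 ha
  rw [hS] at hmem
  obtain ⟨x, y, hxy⟩ := hmem
  exact LaurentSeries.eq_zero_of_single_neg_one_eq hp hxy

theorem stmt_5 (k : Type*) [Field k] (p : ℕ) [Fact p.Prime] [CharP k p] (hp : 2 < p)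
    (S : AddSubgroup (LaurentSeries k))
    (hS : (S : Set (LaurentSeries k)) =
      {z | ∃ x y : LaurentSeries k,
        z = y ^ p - y - HahnSeries.single (1 : ℤ) (1 : k) * x ^ p}) :
    Function.Injective
      (fun a : k => (QuotientAddGroup.mk (HahnSeries.single (-1 : ℤ) a) : LaurentSeries k ⧸ S))
    ∧ ∀ a b : k,
      (QuotientAddGroup.mk (HahnSeries.single (-1 : ℤ) (a + b)) : LaurentSeries k ⧸ S)
        = QuotientAddGroup.mk (HahnSeries.single (-1 : ℤ) a)
          + QuotientAddGroup.mk (HahnSeries.single (-1 : ℤ) b) :=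
  stmt_5_general k p hp S hS
end
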